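/- arXiv:2006.09836 — 2 statements merged into one kernel-verified Lean document; each statement's English description precedes it below -/
import Mathlib

section
/- The Hadamard (hypertangent) cone Ha(F, x̄) is closed under addition: if h₁, h₂ ∈ Ha(F, x̄) then h₁ + h₂ ∈ Ha(F, x̄), provided x̄ ∈ F. -/
/-! Write `x' + t • w = (x' + t • h₁) + t • (w - h₁)`. For `x' ∈ F` near `x̄` and small `t > 0`,
the point `x' + t • h₁` lies in `F` (as `h₁ ∈ Ha F x̄`) and is still near `x̄`, while `w - h₁` is
near `h₂` when `w` is near `h₁ + h₂`; so `h₂ ∈ Ha F x̄` applies at the point `x' + t • h₁`. -/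

open Filter Topology

variable {X : Type*} [AddCommGroup X] [Module ℝ X] [TopologicalSpace X]
  [IsTopologicalAddGroup X] [ContinuousSMul ℝ X]

/-- The Hadamard (hypertangent) cone. -/
def Ha (F : Set X) (xbar : X) : Set X :=
  {h | ∃ U ∈ nhds xbar, ∃ W ∈ nhds h, ∃ lam > (0:ℝ),
    ∀ x' ∈ F ∩ U, ∀ lam' : ℝ, 0 < lam' → lam' ≤ lam → ∀ w ∈ W, x' + lam' • w ∈ F}

section

variable {E : Type*} [AddCommGroup E] [Module ℝ E] [TopologicalSpace E]

theorem mem_Ha_iff_eventually {F : Set E} {xbar h : E} :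
    h ∈ Ha F xbar ↔ ∀ᶠ p : E × ℝ × E in 𝓝[F] xbar ×ˢ 𝓝[>] 0 ×ˢ 𝓝 h, p.1 + p.2.1 • p.2.2 ∈ F := by
  rw [((nhdsWithin_hasBasis (𝓝 xbar).basis_sets F).prod
    ((nhdsGT_basis_Ioc (0 : ℝ)).prod (𝓝 h).basis_sets)).eventually_iff]
  simp only [Ha, Set.mem_ofPred_eq, Prod.exists, Prod.forall, Set.mem_prod, Set.mem_inter_iff,
    Set.mem_Ioc]
  constructor
  · rintro ⟨U, hU, W, hW, lam, hlam, H⟩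
    exact ⟨U, lam, W, ⟨hU, hlam, hW⟩,
      fun x t w ⟨⟨hxU, hxF⟩, ⟨ht, htl⟩, hw⟩ => H x ⟨hxF, hxU⟩ t ht htl w hw⟩
  · rintro ⟨U, lam, W, ⟨hU, hlam, hW⟩, H⟩
    exact ⟨U, hU, W, hW, lam, hlam,
      fun x ⟨hxF, hxU⟩ t ht htl w hw => H x t w ⟨⟨hxU, hxF⟩, ⟨ht, htl⟩, hw⟩⟩

theorem eventually_add_smul_mem_of_mem_Ha {F : Set E} {xbar h : E} (hh : h ∈ Ha F xbar) :
    ∀ᶠ q : E × ℝ in 𝓝[F] xbar ×ˢ 𝓝[>] 0, q.1 + q.2 • h ∈ F :=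
  (tendsto_fst.prodMk (tendsto_snd.prodMk tendsto_const_nhds)).eventually
    (mem_Ha_iff_eventually.1 hh)

theorem tendsto_add_smul_nhdsWithin_of_mem_Ha [ContinuousAdd E] [ContinuousSMul ℝ E]
    {F : Set E} {xbar h : E} (hh : h ∈ Ha F xbar) :
    Tendsto (fun q : E × ℝ => q.1 + q.2 • h) (𝓝[F] xbar ×ˢ 𝓝[>] 0) (𝓝[F] xbar) := by
  refine tendsto_nhdsWithin_iff.2 ⟨?_, eventually_add_smul_mem_of_mem_Ha hh⟩
  have hcont : Tendsto (fun q : E × ℝ => q.1 + q.2 • h) (𝓝 xbar ×ˢ 𝓝 0) (𝓝 xbar) := by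
    simpa using (tendsto_fst.add (tendsto_snd.smul_const h) :
      Tendsto (fun q : E × ℝ => q.1 + q.2 • h) (𝓝 xbar ×ˢ 𝓝 0) (𝓝 (xbar + (0 : ℝ) • h)))
  exact hcont.mono_left (prod_mono nhdsWithin_le_nhds nhdsWithin_le_nhds)

end

theorem ha_add_general (F : Set X) (xbar : X)
    (h₁ h₂ : X) (hh₁ : h₁ ∈ Ha F xbar) (hh₂ : h₂ ∈ Ha F xbar) :
    h₁ + h₂ ∈ Ha F xbar := by
  have hshift : Tendsto (fun w => w - h₁) (𝓝 (h₁ + h₂)) (𝓝 h₂) := by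
    simpa using (tendsto_id.sub_const h₁ : Tendsto (fun w => w - h₁) (𝓝 (h₁ + h₂)) _)
  have hmove : Tendsto (fun p : X × ℝ × X => (p.1 + p.2.1 • h₁, p.2.1, p.2.2 - h₁))
      (𝓝[F] xbar ×ˢ 𝓝[>] 0 ×ˢ 𝓝 (h₁ + h₂)) (𝓝[F] xbar ×ˢ 𝓝[>] 0 ×ˢ 𝓝 h₂) :=
    ((tendsto_add_smul_nhdsWithin_of_mem_Ha hh₁).comp
        (tendsto_fst.prodMk (tendsto_fst.comp tendsto_snd))).prodMk
      ((tendsto_fst.comp tendsto_snd).prodMk (hshift.comp (tendsto_snd.comp tendsto_snd)))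
  refine mem_Ha_iff_eventually.2 ((hmove.eventually (mem_Ha_iff_eventually.1 hh₂)).mono ?_)
  rintro ⟨x, t, w⟩ hmem
  rwa [smul_sub, add_add_sub_cancel] at hmem

theorem ha_add (F : Set X) (xbar : X) (hx : xbar ∈ F)
    (h₁ h₂ : X) (hh₁ : h₁ ∈ Ha F xbar) (hh₂ : h₂ ∈ Ha F xbar) :
    h₁ + h₂ ∈ Ha F xbar :=
  ha_add_general F xbar h₁ h₂ hh₁ hh₂
end

section
/- If h ∈ Ha(F, x̄) and k ∈ Cl(F, x̄), then h + k ∈ Ha(F, x̄) (the hypertangent cone absorbs addition with Clarke tangents). -/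
open Filter Topology

variable {X : Type*} [AddCommGroup X] [Module ℝ X] [TopologicalSpace X]
  [IsTopologicalAddGroup X] [ContinuousSMul ℝ X]

/-- The Clarke tangent cone. -/
def Cl (F : Set X) (xbar : X) : Set X :=
  {h | ∀ V ∈ nhds (0:X), ∃ U ∈ nhds xbar, ∃ lam > (0:ℝ),
    ∀ x' ∈ F ∩ U, ∀ lam' : ℝ, 0 < lam' → lam' ≤ lam →
      ∃ h', h' - h ∈ V ∧ x' + lam' • h' ∈ F}

/-!
Given `x ∈ F` near `x̄`, a small `t > 0` and `w` near `h + k`, the Clarke property supplies `k'`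
near `k` with `x + t • k' ∈ F`. This point is still near `x̄` and `w - k'` is near `h`, so the
hypertangent property at the base point `x + t • k'` in direction `w - k'` gives
`x + t • k' + t • (w - k') = x + t • w ∈ F`.
-/

theorem exists_nhds_sub_mem {G : Type*} [AddGroup G] [TopologicalSpace G] [ContinuousSub G]
    {W : Set G} {h : G} (hW : W ∈ 𝓝 h) (k : G) :
    ∃ W' ∈ 𝓝 (h + k), ∃ K ∈ 𝓝 k, ∀ w ∈ W', ∀ k' ∈ K, w - k' ∈ W := by
  have hsub : Tendsto (fun p : G × G => p.1 - p.2) (𝓝 (h + k) ×ˢ 𝓝 k) (𝓝 h) := by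
    rw [← nhds_prod_eq]
    simpa using continuous_sub.tendsto (h + k, k)
  obtain ⟨W', hW', K, hK, hWK⟩ := mem_prod_iff.1 (hsub hW)
  exact ⟨W', hW', K, hK, fun w hw k' hk' => @hWK (w, k') ⟨hw, hk'⟩⟩

theorem exists_nhds_add_smul_mem {E : Type*} [AddCommMonoid E] [Module ℝ E] [TopologicalSpace E]
    [ContinuousAdd E] [ContinuousSMul ℝ E] {U : Set E} {xbar : E} (hU : U ∈ 𝓝 xbar) (k : E) :
    ∃ U' ∈ 𝓝 xbar, ∃ K ∈ 𝓝 k, ∃ δ > (0 : ℝ),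
      ∀ x ∈ U', ∀ t : ℝ, 0 < t → t ≤ δ → ∀ k' ∈ K, x + t • k' ∈ U := by
  have hmove : Tendsto (fun p : E × ℝ × E => p.1 + p.2.1 • p.2.2)
      (𝓝 xbar ×ˢ (𝓝 0 ×ˢ 𝓝 k)) (𝓝 xbar) := by
    rw [← nhds_prod_eq, ← nhds_prod_eq]
    simpa using (by fun_prop : Continuous fun p : E × ℝ × E => p.1 + p.2.1 • p.2.2).tendsto
      (xbar, 0, k)
  obtain ⟨U', hU', S, hS, hU'S⟩ := mem_prod_iff.1 (hmove hU)
  obtain ⟨T, hT, K, hK, hTK⟩ := mem_prod_iff.1 hS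
  obtain ⟨δ, hδ, hδT⟩ := mem_nhdsGT_iff_exists_Ioc_subset.1 (mem_nhdsWithin_of_mem_nhds hT)
  exact ⟨U', hU', K, hK, δ, hδ, fun x hx t ht htδ k' hk' =>
    @hU'S (x, t, k') ⟨hx, hTK ⟨hδT ⟨ht, htδ⟩, hk'⟩⟩⟩

theorem exists_add_smul_mem_of_mem_Cl {E : Type*} [AddCommGroup E] [Module ℝ E]
    [TopologicalSpace E] [ContinuousAdd E] {F : Set E} {xbar k : E} (hk : k ∈ Cl F xbar)
    {K : Set E} (hK : K ∈ 𝓝 k) :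
    ∃ U ∈ 𝓝 xbar, ∃ lam > (0 : ℝ),
      ∀ x ∈ F ∩ U, ∀ t : ℝ, 0 < t → t ≤ lam → ∃ k' ∈ K, x + t • k' ∈ F := by
  have hV : (· + k) ⁻¹' K ∈ 𝓝 (0 : E) :=
    (continuous_add_const k).continuousAt.preimage_mem_nhds (by rwa [zero_add])
  obtain ⟨U, hU, lam, hlam, hCl⟩ := hk _ hV
  refine ⟨U, hU, lam, hlam, fun x hx t ht htlam => ?_⟩
  obtain ⟨k', hk'K, hk'F⟩ := hCl x hx t ht htlam
  exact ⟨k', by simpa using hk'K, hk'F⟩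

theorem ha_add_cl (F : Set X) (xbar : X) (h k : X)
    (hh : h ∈ Ha F xbar) (hk : k ∈ Cl F xbar) : h + k ∈ Ha F xbar := by
  obtain ⟨U, hU, W, hW, lam, hlam, hHa⟩ := hh
  obtain ⟨U₁, hU₁, K₁, hK₁, δ, hδ, hU₁U⟩ := exists_nhds_add_smul_mem hU k
  obtain ⟨W', hW', K₂, hK₂, hW'W⟩ := exists_nhds_sub_mem hW k
  obtain ⟨U₂, hU₂, μ, hμ, hCl⟩ := exists_add_smul_mem_of_mem_Cl hk (inter_mem hK₁ hK₂)
  refine ⟨U₁ ∩ U₂, inter_mem hU₁ hU₂, W', hW', min lam (min δ μ), by positivity, ?_⟩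
  rintro x ⟨hxF, hxU₁, hxU₂⟩ t ht htle w hw
  obtain ⟨htlam, htδ, htμ⟩ : t ≤ lam ∧ t ≤ δ ∧ t ≤ μ := by simpa only [le_min_iff] using htle
  obtain ⟨k', ⟨hk'₁, hk'₂⟩, hxk'F⟩ := hCl x ⟨hxF, hxU₂⟩ t ht htμ
  have hstep := hHa (x + t • k') ⟨hxk'F, hU₁U x hxU₁ t ht htδ k' hk'₁⟩ t ht htlam
    (w - k') (hW'W w hw k' hk'₂)
  rwa [add_assoc, ← smul_add, add_sub_cancel] at hstep
end
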